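/- arXiv:1512.00116 — 2 statements merged into one kernel-verified Lean document; each statement's English description precedes it below -/
import Mathlib

section
/- The Schur polynomial indexed by the staircase partition ρ_n = (n-1, n-2, …, 1, 0) in n variables factors as a product: s_{ρ_n}(x_1,…,x_n) = ∏_{1 ≤ i < j ≤ n} (x_i + x_j). -/
open Finset

noncomputable section

/-- The field of rational functions in `n` variables over `ℚ`. -/
abbrev RF (n : ℕ) := FractionRing (MvPolynomial (Fin n) ℚ)

/-- The variables `x_1, …, x_n`. -/
def xv (n : ℕ) (i : Fin n) : RF n :=
  algebraMap (MvPolynomial (Fin n) ℚ) (RF n) (MvPolynomial.X i)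

/-- The alternant `det(x_i^{e_j})`. -/
def alternant (n : ℕ) (e : Fin n → ℕ) : RF n :=
  Matrix.det (Matrix.of fun i j : Fin n => xv n i ^ e j)

/-! Both alternants are Vandermonde determinants with reversed columns, in the variables `x_i`
and `x_i²` respectively, so their quotient is
`∏_{i<j} (x_j² - x_i²) / ∏_{i<j} (x_j - x_i) = ∏_{i<j} (x_i + x_j)`. -/

open Matrix

lemma prod_filter_lt_eq_prod_prod_Ioi {ι M : Type*} [Fintype ι] [LinearOrder ι]
    [LocallyFiniteOrderTop ι] [CommMonoid M] (f : ι → ι → M) :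
    ∏ p ∈ univ.filter (fun p : ι × ι => p.1 < p.2), f p.1 p.2 = ∏ i, ∏ j ∈ Ioi i, f i j := by
  rw [prod_filter, Fintype.prod_prod_type]
  refine prod_congr rfl fun i _ => ?_
  rw [← prod_filter]
  congr 1
  ext j
  simp

lemma det_of_pow_rev_eq_sign_mul_det_vandermonde {R : Type*} [CommRing R] {n : ℕ}
    (v : Fin n → R) :
    det (of fun i j : Fin n => v i ^ (n - 1 - (j : ℕ)))
      = (Equiv.Perm.sign (Fin.revPerm (n := n)) : R) * det (vandermonde v) := by
  have hrev : (of fun i j : Fin n => v i ^ (n - 1 - (j : ℕ)))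
      = (vandermonde v).submatrix id Fin.revPerm := by
    ext i j
    simp only [of_apply, submatrix_apply, id_eq, vandermonde_apply, Fin.revPerm_apply,
      Fin.val_rev]
    congr 1
    omega
  rw [hrev, det_permute']

lemma det_vandermonde_sq {R : Type*} [CommRing R] {n : ℕ} (v : Fin n → R) :
    det (vandermonde fun i => v i ^ 2)
      = det (vandermonde v) * ∏ i, ∏ j ∈ Ioi i, (v i + v j) := by
  simp only [det_vandermonde, ← prod_mul_distrib]
  refine prod_congr rfl fun i _ => prod_congr rfl fun j _ => ?_
  ring

lemma xv_injective (n : ℕ) : Function.Injective (xv n) :=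
  (IsFractionRing.injective (MvPolynomial (Fin n) ℚ) (RF n)).comp MvPolynomial.X_injective

lemma alternant_pow_rev (n k : ℕ) :
    alternant n (fun j => k * (n - 1 - (j : ℕ)))
      = (Equiv.Perm.sign (Fin.revPerm (n := n)) : RF n)
          * det (vandermonde fun i => xv n i ^ k) := by
  simp only [alternant, pow_mul, det_of_pow_rev_eq_sign_mul_det_vandermonde]

theorem schur_staircase_factorization_general (n : ℕ) :
    alternant n (fun j => 2 * (n - 1 - (j : ℕ))) / alternant n (fun j => n - 1 - (j : ℕ))
      = ∏ p ∈ Finset.univ.filter (fun p : Fin n × Fin n => p.1 < p.2),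
          (xv n p.1 + xv n p.2) := by
  have hsign : (Equiv.Perm.sign (Fin.revPerm (n := n)) : RF n) ≠ 0 := by
    rcases Int.units_eq_one_or (Equiv.Perm.sign (Fin.revPerm (n := n))) with h | h <;> simp [h]
  have hvdm : det (vandermonde (xv n)) ≠ 0 := det_vandermonde_ne_zero_iff.2 (xv_injective n)
  have hden := alternant_pow_rev n 1
  simp only [one_mul, pow_one] at hden
  rw [alternant_pow_rev, hden, det_vandermonde_sq,
    prod_filter_lt_eq_prod_prod_Ioi (fun i j => xv n i + xv n j), mul_div_mul_left _ _ hsign,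
    mul_div_cancel_left₀ _ hvdm]

/-- The Schur polynomial indexed by the staircase partition
`ρ_n = (n-1, n-2, …, 1, 0)`, i.e. `det(x_i^{2(n-j)})/det(x_i^{n-j})`, factors as the
product `∏_{i<j} (x_i + x_j)`. -/
theorem schur_staircase_factorization (n : ℕ) (hn : 1 ≤ n) :
    alternant n (fun j => 2 * (n - 1 - (j : ℕ))) / alternant n (fun j => n - 1 - (j : ℕ))
      = ∏ p ∈ Finset.univ.filter (fun p : Fin n × Fin n => p.1 < p.2),
          (xv n p.1 + xv n p.2) :=
  schur_staircase_factorization_general n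

end
end

section
/- With the explicit bar involution on the rank-2 tensor space as above, the elements T_{(r,s)} defined by: T_{(r,s)} = M_{(r,s)} for r ≤ s, r+s≠0; T_{(r,s)} = M_{(r,s)} + q M_{(s,r)} for r > s, r+s≠0; T_{(-r,r)} = M_{(-r,r)} + q M_{(-r-1,r+1)} for r ≥ 1/2; T_{(1/2,-1/2)} = M_{(1/2,-1/2)} + q² M_{(-1/2,1/2)}; and T_{(r,-r)} = M_{(r,-r)} + q M_{(r-1,-r+1)} + q M_{(-r+1,r-1)} + q² M_{(-r,r)} for r ≥ 3/2, are all bar-invariant. -/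
/-!
Write every half-odd-integer as `k + 1/2` with `k : ℤ`; then all case distinctions in `Bc` and
`Tc` become integer conditions. Off the antidiagonal `r + s = 0`, `bar T_λ` involves at most two
basis vectors and is checked directly. On the antidiagonal every infinite series occurring in
`bar M_{(-t,t)}` and `bar M_{(t,-t)}` is, up to a factor, the tail
`tail c b = (q - q⁻¹)(-q)^(b-c+1) [b < c]`, and these tails satisfy
`tail c = (q - q⁻¹) δ_{c-1} - q⁻¹ tail (c - 1)`. The terms of `T_λ` sit at consecutive
antidiagonal indices with coefficients `1, q` (or `q, q²`), so in `bar T_λ` the tails cancel in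
pairs and only the coefficients of `T_λ` survive.
-/

noncomputable section
open Finset LaurentPolynomial

/-- Half-odd-integers. -/
abbrev HO : Type := {x : ℚ // ∃ k : ℤ, x = k + 1/2}

def HO.neg (r : HO) : HO :=
  ⟨-r.val, by obtain ⟨k, hk⟩ := r.2; exact ⟨-k - 1, by rw [hk]; push_cast; ring⟩⟩

/-- Laurent polynomials `ℤ[q,q⁻¹]`. -/
abbrev Lq : Type := LaurentPolynomial ℤ

def qL : Lq := LaurentPolynomial.T 1
def qLinv : Lq := LaurentPolynomial.T (-1)

/-- `(-q)^z` for `z ∈ ℤ`. -/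
def negqpow (z : ℤ) : Lq := (if Even z then 1 else -1) * LaurentPolynomial.T z

/-- The coefficient of `M_μ` in `bar(M_λ)` (indices are pairs of half-odd-integers):
`bar M_{(r,s)} = M_{(r,s)}` for `r ≤ s`, `r+s ≠ 0`;
`bar M_{(r,s)} = M_{(r,s)} + (q-q⁻¹) M_{(s,r)}` for `r > s`, `r+s ≠ 0`;
`bar M_{(-t,t)} = M_{(-t,t)} + Σ_{u>t} (q-q⁻¹)(-q)^{t+1-u} M_{(-u,u)}` for `t > 0`;
`bar M_{(t,-t)} = M_{(t,-t)} + q(q-q⁻¹) M_{(-t,t)}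
  + Σ_{0<u<t} (q-q⁻¹)(-q)^{u+1-t} M_{(u,-u)}
  + Σ_{u<0} q⁻¹(q-q⁻¹)(-q)^{u+1-t} M_{(u,-u)}` for `t > 0`. -/
def Bc (l m : HO × HO) : Lq :=
  let r := l.1; let s := l.2
  if r.val + s.val ≠ 0 then
    if r ≤ s then (if m = l then 1 else 0)
    else (if m = l then 1 else 0) + (if m = (s, r) then qL - qLinv else 0)
  else if r.val < 0 then
    (if m = l then 1 else 0) +
      (if m.2 = HO.neg m.1 ∧ m.1.val < 0 ∧ s.val < m.2.val then
        (qL - qLinv) * negqpow ⌊s.val + 1 - m.2.val⌋ else 0)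
  else
    (if m = l then 1 else 0) +
    (if m = (s, r) then qL * (qL - qLinv) else 0) +
    (if m.2 = HO.neg m.1 ∧ 0 < m.1.val ∧ m.1.val < r.val then
      (qL - qLinv) * negqpow ⌊m.1.val + 1 - r.val⌋ else 0) +
    (if m.2 = HO.neg m.1 ∧ m.1.val < 0 then
      qLinv * (qL - qLinv) * negqpow ⌊m.1.val + 1 - r.val⌋ else 0)

def HO.add1 (r : HO) : HO :=
  ⟨r.val + 1, by obtain ⟨k, hk⟩ := r.2; exact ⟨k + 1, by rw [hk]; push_cast; ring⟩⟩

def HO.sub1 (r : HO) : HO :=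
  ⟨r.val - 1, by obtain ⟨k, hk⟩ := r.2; exact ⟨k - 1, by rw [hk]; push_cast; ring⟩⟩

/-- The coefficient of `M_μ` in the canonical basis element `T_λ`:
`T_{(r,s)} = M_{(r,s)}` for `r ≤ s`, `r+s ≠ 0`;
`T_{(r,s)} = M_{(r,s)} + q M_{(s,r)}` for `r > s`, `r+s ≠ 0`;
`T_{(-t,t)} = M_{(-t,t)} + q M_{(-t-1,t+1)}` for `t ≥ 1/2`;
`T_{(1/2,-1/2)} = M_{(1/2,-1/2)} + q² M_{(-1/2,1/2)}`;
`T_{(t,-t)} = M_{(t,-t)} + q M_{(t-1,-t+1)} + q M_{(-t+1,t-1)} + q² M_{(-t,t)}`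
for `t ≥ 3/2`. -/
def Tc (l m : HO × HO) : Lq :=
  let r := l.1; let s := l.2
  if r.val + s.val ≠ 0 then
    if r ≤ s then (if m = l then 1 else 0)
    else (if m = l then 1 else 0) + (if m = (s, r) then qL else 0)
  else if r.val < 0 then
    (if m = l then 1 else 0) + (if m = (HO.neg (HO.add1 s), HO.add1 s) then qL else 0)
  else if r.val = 1/2 then
    (if m = l then 1 else 0) + (if m = (s, r) then qL ^ 2 else 0)
  else
    (if m = l then 1 else 0) + (if m = (HO.sub1 r, HO.neg (HO.sub1 r)) then qL else 0)
      + (if m = (HO.neg (HO.sub1 r), HO.sub1 r) then qL else 0)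
      + (if m = (s, r) then qL ^ 2 else 0)


lemma qL_mul_qLinv : qL * qLinv = 1 := by rw [qL, qLinv, ← T_add]; norm_num

@[simp] lemma invert_qL : invert qL = qLinv := invert_T 1

lemma negqpow_zero : negqpow 0 = 1 := by simp [negqpow]

lemma negqpow_add_one (z : ℤ) : negqpow (z + 1) = -(qL * negqpow z) := by
  have hT : (T (z + 1) : Lq) = qL * T z := by rw [qL, ← T_add, add_comm]
  rcases Int.even_or_odd z with h | h
  · simp [negqpow, hT, h]
  · simp [negqpow, hT, Int.not_even_iff_odd.mpr h]

namespace HO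

def ofInt (k : ℤ) : HO := ⟨k + 1/2, k, rfl⟩

lemma ofInt_val (k : ℤ) : (ofInt k).val = k + 1/2 := rfl

lemma ofInt_surjective : Function.Surjective ofInt := fun ⟨_, k, hk⟩ => ⟨k, Subtype.ext hk.symm⟩

lemma exists_pair_eq_ofInt (nu : HO × HO) : ∃ b d, nu = (ofInt b, ofInt d) := by
  obtain ⟨b, hb⟩ := ofInt_surjective nu.1
  obtain ⟨d, hd⟩ := ofInt_surjective nu.2
  exact ⟨b, d, Prod.ext hb.symm hd.symm⟩

@[simp] lemma ofInt_inj {a b : ℤ} : ofInt a = ofInt b ↔ a = b := by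
  simp [ofInt, Subtype.ext_iff]

lemma ofInt_val_lt_ofInt_val {a b : ℤ} : (ofInt a).val < (ofInt b).val ↔ a < b := by
  rw [ofInt_val, ofInt_val]; norm_cast; simp

@[simp] lemma ofInt_lt_ofInt {a b : ℤ} : ofInt a < ofInt b ↔ a < b := ofInt_val_lt_ofInt_val

@[simp] lemma ofInt_le_ofInt {a b : ℤ} : ofInt a ≤ ofInt b ↔ a ≤ b := by
  rw [← not_lt, ofInt_lt_ofInt, not_lt]

@[simp] lemma ofInt_val_neg {a : ℤ} : (ofInt a).val < 0 ↔ a < 0 := by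
  rw [ofInt_val]
  constructor
  · intro h; exact_mod_cast (show (a : ℚ) < 0 by linarith)
  · intro h; linarith [show (a : ℚ) ≤ -1 by exact_mod_cast (show a ≤ -1 by omega)]

@[simp] lemma ofInt_val_pos {a : ℤ} : 0 < (ofInt a).val ↔ 0 ≤ a := by
  rw [ofInt_val]
  constructor
  · intro h; exact_mod_cast (show (-1 : ℚ) < a by linarith)
  · intro h; linarith [show (0 : ℚ) ≤ a by exact_mod_cast h]

@[simp] lemma ofInt_val_eq_inv_two {a : ℤ} : (ofInt a).val = 2⁻¹ ↔ a = 0 := by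
  simp [ofInt_val]

@[simp] lemma ofInt_val_add_ofInt_val_eq_zero {a b : ℤ} :
    (ofInt a).val + (ofInt b).val = 0 ↔ b = -a - 1 := by
  rw [ofInt_val, ofInt_val, show (a : ℚ) + 1/2 + (b + 1/2) = ((a + b + 1 : ℤ) : ℚ) by push_cast; ring]
  norm_cast; omega

@[simp] lemma floor_ofInt_val_add_one_sub_ofInt_val (a b : ℤ) :
    ⌊(ofInt a).val + 1 - (ofInt b).val⌋ = a - b + 1 := by
  rw [ofInt_val, ofInt_val, Int.floor_eq_iff]
  push_cast
  constructor <;> linarith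

@[simp] lemma neg_ofInt (k : ℤ) : (ofInt k).neg = ofInt (-k - 1) :=
  Subtype.ext (by simp [HO.neg, ofInt_val]; ring)

@[simp] lemma add1_ofInt (k : ℤ) : (ofInt k).add1 = ofInt (k + 1) :=
  Subtype.ext (by simp [HO.add1, ofInt_val]; ring)

@[simp] lemma sub1_ofInt (k : ℤ) : (ofInt k).sub1 = ofInt (k - 1) :=
  Subtype.ext (by simp [HO.sub1, ofInt_val]; ring)

end HO

open HO

lemma finsum_eq_finsupp_sum {α M N : Type*} [Zero M] [AddCommMonoid N] (f : α →₀ M)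
    (h : α → M → N) (h_zero : ∀ a, h a 0 = 0) : ∑ᶠ a, h a (f a) = f.sum h := by
  refine finsum_eq_sum_of_support_subset _ fun a ha => ?_
  by_contra hf
  exact ha (by simp [Finsupp.notMem_support_iff.mp hf, h_zero])

lemma finsum_invert_mul {α : Type*} (f : α →₀ Lq) (g : α → Lq) :
    ∑ᶠ m, invert (f m) * g m = f.sum fun m c => invert c * g m :=
  finsum_eq_finsupp_sum f (fun m c => invert c * g m) (by simp)

lemma finsum_invert_add_mul {α : Type*} (f₁ f₂ : α →₀ Lq) (g : α → Lq) :
    ∑ᶠ m, invert ((f₁ + f₂) m) * g m = ∑ᶠ m, invert (f₁ m) * g m + ∑ᶠ m, invert (f₂ m) * g m := by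
  simp only [finsum_invert_mul]
  exact Finsupp.sum_add_index' (by simp) (by simp [add_mul])

lemma finsum_invert_single_mul {α : Type*} (x : α) (c : Lq) (g : α → Lq) :
    ∑ᶠ m, invert (Finsupp.single x c m) * g m = invert c * g x := by
  rw [finsum_invert_mul, Finsupp.sum_single_index (by simp)]

lemma bar_Tc_of_le {i j : ℤ} (hij : j ≠ -i - 1) (h : i ≤ j) (nu : HO × HO) :
    ∑ᶠ m, invert (Tc (ofInt i, ofInt j) m) * Bc m nu = Tc (ofInt i, ofInt j) nu := by
  have hT : Tc (ofInt i, ofInt j) = ⇑(Finsupp.single (ofInt i, ofInt j) 1 : HO × HO →₀ Lq) := by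
    funext m; simp [Tc, Finsupp.single_apply, hij, h, eq_comm]
  rw [hT, finsum_invert_single_mul, map_one, one_mul]
  simp [Bc, Finsupp.single_apply, hij, h, eq_comm]

lemma bar_Tc_of_gt {i j : ℤ} (hij : j ≠ -i - 1) (h : j < i) (nu : HO × HO) :
    ∑ᶠ m, invert (Tc (ofInt i, ofInt j) m) * Bc m nu = Tc (ofInt i, ofInt j) nu := by
  have hT : Tc (ofInt i, ofInt j) = ⇑(Finsupp.single (ofInt i, ofInt j) 1
      + Finsupp.single (ofInt j, ofInt i) qL : HO × HO →₀ Lq) := by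
    funext m; simp [Tc, Finsupp.single_apply, hij, h, eq_comm]
  rw [hT, finsum_invert_add_mul, finsum_invert_single_mul, finsum_invert_single_mul, map_one,
    one_mul, invert_qL]
  have hji : i ≠ -j - 1 := by omega
  simp [Bc, Finsupp.single_apply, hij, hji, h.le, eq_comm]
  split_ifs <;> first | omega | ring

/-- The antidiagonal index `(k + 1/2, -k - 1/2)`. -/
def anti (k : ℤ) : HO × HO := (ofInt k, ofInt (-k - 1))

lemma single_anti_apply_anti (a b : ℤ) (c : Lq) :
    Finsupp.single (anti a) c (anti b) = c * if a = b then 1 else 0 := by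
  simp [Finsupp.single_apply, anti]

def tail (c b : ℤ) : Lq := if b < c then (qL - qLinv) * negqpow (b - c + 1) else 0

lemma tail_eq (c b : ℤ) :
    tail c b = (qL - qLinv) * (if c - 1 = b then 1 else 0) - qLinv * tail (c - 1) b := by
  unfold tail
  split_ifs with h₁ h₂ <;> try omega
  · subst h₂; simp [negqpow_zero]
  · rw [show b - (c - 1) + 1 = (b - c + 1) + 1 by ring, negqpow_add_one (b - c + 1)]
    linear_combination (-(qL - qLinv) * negqpow (b - c + 1)) * qL_mul_qLinv
  · simp

lemma Bc_anti_anti_of_neg {a : ℤ} (ha : a < 0) (b : ℤ) :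
    Bc (anti a) (anti b) = (if a = b then 1 else 0) + tail a b := by
  simp [Bc, anti, tail, ha, neg_add_eq_sub]
  split_ifs <;> first | omega | rfl

lemma Bc_anti_anti_of_nonneg {a : ℤ} (ha : 0 ≤ a) (b : ℤ) :
    Bc (anti a) (anti b) = (if a = b then 1 else 0)
      + qL * (qL - qLinv) * (if -a - 1 = b then 1 else 0)
      + (if 0 ≤ b then 1 else qLinv) * tail a b := by
  simp [Bc, anti, tail, not_lt.mpr ha]
  split_ifs <;> first | omega | ring

lemma Bc_anti_of_notMem_range {nu : HO × HO} (hnu : nu ∉ Set.range anti) (a : ℤ) :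
    Bc (anti a) nu = 0 := by
  obtain ⟨b, d, rfl⟩ := exists_pair_eq_ofInt nu
  have hd : d ≠ -b - 1 := by rintro rfl; exact hnu ⟨b, rfl⟩
  simp [Bc, anti, hd]
  split_ifs <;> first | omega | simp

lemma Tc_anti_of_neg {a : ℤ} (ha : a < 0) :
    Tc (anti a) = ⇑(Finsupp.single (anti a) 1 + Finsupp.single (anti (a - 1)) qL
      : HO × HO →₀ Lq) := by
  funext ⟨x, y⟩
  obtain ⟨b, rfl⟩ := ofInt_surjective x
  obtain ⟨d, rfl⟩ := ofInt_surjective y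
  simp [Tc, anti, Finsupp.single_apply, ha]
  split_ifs <;> first | omega | simp

lemma Tc_anti_zero :
    Tc (anti 0) = ⇑(Finsupp.single (anti 0) 1 + Finsupp.single (anti (-1)) (qL ^ 2)
      : HO × HO →₀ Lq) := by
  funext ⟨x, y⟩
  obtain ⟨b, rfl⟩ := ofInt_surjective x
  obtain ⟨d, rfl⟩ := ofInt_surjective y
  simp [Tc, anti, Finsupp.single_apply]
  split_ifs <;> first | omega | simp

lemma Tc_anti_of_pos {a : ℤ} (ha : 0 < a) :
    Tc (anti a) = ⇑(Finsupp.single (anti a) 1 + Finsupp.single (anti (a - 1)) qL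
      + Finsupp.single (anti (-a)) qL + Finsupp.single (anti (-a - 1)) (qL ^ 2)
      : HO × HO →₀ Lq) := by
  funext ⟨x, y⟩
  obtain ⟨b, rfl⟩ := ofInt_surjective x
  obtain ⟨d, rfl⟩ := ofInt_surjective y
  simp [Tc, anti, Finsupp.single_apply, ha.not_gt, ha.ne']
  split_ifs <;> first | omega | simp

lemma bar_Tc_anti_of_neg {a : ℤ} (ha : a < 0) (nu : HO × HO) :
    ∑ᶠ m, invert (Tc (anti a) m) * Bc m nu = Tc (anti a) nu := by
  rw [Tc_anti_of_neg ha, finsum_invert_add_mul, finsum_invert_single_mul, finsum_invert_single_mul,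
    Finsupp.add_apply, map_one, one_mul, invert_qL]
  by_cases hnu : nu ∈ Set.range anti
  · obtain ⟨b, rfl⟩ := hnu
    rw [Bc_anti_anti_of_neg ha, Bc_anti_anti_of_neg (by omega), tail_eq a, single_anti_apply_anti,
      single_anti_apply_anti]
    ring
  · have hne : ∀ a, anti a ≠ nu := fun a h => hnu ⟨a, h⟩
    simp [Bc_anti_of_notMem_range hnu, hne]

lemma bar_Tc_anti_zero (nu : HO × HO) :
    ∑ᶠ m, invert (Tc (anti 0) m) * Bc m nu = Tc (anti 0) nu := by
  rw [Tc_anti_zero, finsum_invert_add_mul, finsum_invert_single_mul, finsum_invert_single_mul,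
    Finsupp.add_apply, map_one, one_mul, map_pow, invert_qL]
  by_cases hnu : nu ∈ Set.range anti
  · obtain ⟨b, rfl⟩ := hnu
    have h := tail_eq 0 b
    have hw : (if 0 ≤ b then 1 else qLinv) * tail 0 b = qLinv * tail 0 b := by
      unfold tail; split_ifs <;> first | omega | ring
    rw [Bc_anti_anti_of_nonneg le_rfl, Bc_anti_anti_of_neg (by norm_num), single_anti_apply_anti,
      single_anti_apply_anti]
    simp only [neg_zero, zero_sub] at h ⊢
    linear_combination hw + qLinv * h
  · have hne : ∀ a, anti a ≠ nu := fun a h => hnu ⟨a, h⟩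
    simp [Bc_anti_of_notMem_range hnu, hne]

lemma bar_Tc_anti_of_pos {a : ℤ} (ha : 0 < a) (nu : HO × HO) :
    ∑ᶠ m, invert (Tc (anti a) m) * Bc m nu = Tc (anti a) nu := by
  rw [Tc_anti_of_pos ha]
  simp only [finsum_invert_add_mul, finsum_invert_single_mul]
  simp only [Finsupp.add_apply, map_one, one_mul, map_pow, invert_qL]
  by_cases hnu : nu ∈ Set.range anti
  · obtain ⟨b, rfl⟩ := hnu
    have h₁ := tail_eq a b
    have h₂ := tail_eq (-a) b
    have hw : (if 0 ≤ b then 1 else qLinv) * (if a - 1 = b then 1 else 0) =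
        (if a - 1 = b then 1 else 0 : Lq) := by
      split_ifs <;> first | omega | ring
    rw [Bc_anti_anti_of_nonneg ha.le, Bc_anti_anti_of_nonneg (by omega),
      Bc_anti_anti_of_neg (by omega), Bc_anti_anti_of_neg (by omega), show -(a - 1) - 1 = -a by ring]
    simp only [single_anti_apply_anti]
    linear_combination (if 0 ≤ b then 1 else qLinv) * h₁ + (qL - qLinv) * hw + qLinv * h₂
      + (qL - qLinv) * (if -a = b then 1 else 0) * qL_mul_qLinv
  · have hne : ∀ a, anti a ≠ nu := fun a h => hnu ⟨a, h⟩
    simp [Bc_anti_of_notMem_range hnu, hne]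

/-- The elements `T_λ` are bar-invariant: for all `λ, ν`,
`Σ_μ bar(T-coefficient of M_μ in T_λ) · B_{μν} = (T-coefficient of M_ν in T_λ)`,
i.e. `bar(T_λ) = T_λ` in the completed rank-2 tensor space. -/
theorem T_is_bar_invariant (l nu : HO × HO) :
    ∑ᶠ m : HO × HO, (LaurentPolynomial.invert (Tc l m)) * Bc m nu = Tc l nu := by
  obtain ⟨i, j, rfl⟩ := exists_pair_eq_ofInt l
  by_cases hij : j = -i - 1
  · subst hij
    rcases lt_trichotomy i 0 with hi | rfl | hi
    · exact bar_Tc_anti_of_neg hi nu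
    · exact bar_Tc_anti_zero nu
    · exact bar_Tc_anti_of_pos hi nu
  · rcases le_or_gt i j with h | h
    · exact bar_Tc_of_le hij h nu
    · exact bar_Tc_of_gt hij h nu

end
end
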